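/- arXiv:2202.02020 — 3 statements merged into one kernel-verified Lean document; each statement's English description precedes it below -/
import Mathlib

section
/- Let $k$ be a perfect field of characteristic $p$ and fix $m \in \mathbb{Z}$. Let $w(Y) \in Y + Y^2\cdot k[[Y]]$ be invertible under composition and nontorsion, meaning $w^{\circ n}(Y) \neq Y$ for all $n \geq 1$. Let $f(Y) \in Y\cdot k[[Y]]$ be separable, i.e., $f'(Y) \neq 0$. If $w^{(m)} \circ f = f \circ w$, then $f'(0) \neq 0$, i.e., $f$ is invertible under composition. -/
open PowerSeries

/-- Composition (substitution) of formal power series: `(w.comp' v)(Y) = w(v(Y))`,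
intended for `v` with zero constant coefficient. -/
noncomputable def PowerSeries.comp' {k : Type*} [CommSemiring k] (w v : PowerSeries k) :
    PowerSeries k :=
  PowerSeries.mk fun n => ∑ i ∈ Finset.range (n + 1), coeff i w * coeff n (v ^ i)

/-- `w.iter n` is the `n`-fold composition iterate `w^{∘n}` of `w`, with `w^{∘0} = Y`. -/
noncomputable def PowerSeries.iter {k : Type*} [CommSemiring k] (w : PowerSeries k) :
    ℕ → PowerSeries k
  | 0 => X
  | n + 1 => w.comp' (w.iter n)


/-- Apply `x ↦ x^(p^m)` (the `m`-th power of the Frobenius automorphism, `m ∈ ℤ`)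
to each coefficient of a power series over a perfect field of characteristic `p`. -/
noncomputable def coeffTwist (k : Type*) [Field k] (p : ℕ) [Fact p.Prime] [CharP k p]
    [PerfectRing k p] (m : ℤ) : PowerSeries k → PowerSeries k :=
  PowerSeries.map (↑(frobeniusEquiv k p ^ m : k ≃+* k) : k →+* k)

/-!
Suppose `f'(0) = 0`, so that `f ∈ Y²k[[Y]]`, and let `e` be the order of `f'`. In characteristic
`p`, the `p`-th iterate of `Y + aY^M + ⋯` (with `M ≥ 2`) is `Y + p·aY^M + ⋯`, so it agrees with
`Y` modulo `Y^(M+1)`; hence `u = w^{∘p^e}` is `Y + h` with `h` of order `r ≥ e + 2`, and `h ≠ 0`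
because `w` is nontorsion. Iterating the relation gives `u^(m) ∘ f = f ∘ u`. Compare the
coefficients of `Y^(e+r)`: on the left `u^(m) ∘ f = f + h^(m) ∘ f`, where `h^(m) ∘ f` has order
`≥ 2r`; on the right `f ∘ (Y + h) ≡ f + f'·h` modulo `h²`, and the coefficient of `Y^(e+r)` in
`f'·h` is `f'_e·h_r ≠ 0`.
-/

namespace PowerSeries

variable {R : Type*} [CommRing R]

theorem coeff_pow_eq_zero_of_lt {v : R⟦X⟧} (hv : constantCoeff v = 0) {n d : ℕ} (h : n < d) :
    coeff n (v ^ d) = 0 :=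
  X_pow_dvd_iff.mp (pow_dvd_pow_of_dvd (X_dvd_iff.mpr hv) d) n h

theorem comp'_eq_subst {w v : R⟦X⟧} (hv : constantCoeff v = 0) : w.comp' v = w.subst v := by
  ext n
  rw [comp', coeff_mk, coeff_subst' (HasSubst.of_constantCoeff_zero' hv),
    finsum_eq_sum_of_support_subset _ (s := Finset.range (n + 1))]
  · simp only [smul_eq_mul]
  · intro d hd
    rw [Finset.coe_range, Set.mem_Iio]
    by_contra hnd
    exact hd (show coeff d w • coeff n (v ^ d) = 0 by
      rw [coeff_pow_eq_zero_of_lt hv (by omega), smul_zero])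

theorem constantCoeff_subst_of_constantCoeff_zero {v : R⟦X⟧} (hv : constantCoeff v = 0)
    (w : R⟦X⟧) : constantCoeff (w.subst v) = constantCoeff w := by
  rw [← comp'_eq_subst hv, ← coeff_zero_eq_constantCoeff_apply, comp', coeff_mk]
  simp

theorem constantCoeff_eq_zero_of_X_pow_dvd {n : ℕ} (hn : n ≠ 0) {φ : R⟦X⟧} (h : X ^ n ∣ φ) :
    constantCoeff φ = 0 :=
  X_dvd_iff.mp ((dvd_pow_self X hn).trans h)

theorem constantCoeff_map {S : Type*} [CommRing S] (σ : R →+* S) (φ : R⟦X⟧) :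
    constantCoeff (map σ φ) = σ (constantCoeff φ) :=
  MvPowerSeries.constantCoeff_map σ φ

section Iterate

variable {w : R⟦X⟧}

theorem constantCoeff_iter (hw : constantCoeff w = 0) : ∀ n, constantCoeff (w.iter n) = 0
  | 0 => constantCoeff_X
  | n + 1 => by
    rw [iter, comp'_eq_subst (constantCoeff_iter hw n),
      constantCoeff_subst_of_constantCoeff_zero (constantCoeff_iter hw n), hw]

theorem hasSubst_iter (hw : constantCoeff w = 0) (n : ℕ) : HasSubst (w.iter n) :=
  HasSubst.of_constantCoeff_zero' (constantCoeff_iter hw n)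

theorem iter_succ (hw : constantCoeff w = 0) (n : ℕ) : w.iter (n + 1) = w.subst (w.iter n) :=
  comp'_eq_subst (constantCoeff_iter hw n)

theorem iter_add (hw : constantCoeff w = 0) (a b : ℕ) :
    w.iter (a + b) = (w.iter a).subst (w.iter b) := by
  induction a with
  | zero => rw [zero_add, iter, subst_X (hasSubst_iter hw b)]
  | succ a ih =>
    rw [add_right_comm, iter_succ hw, ih, iter_succ hw,
      subst_comp_subst_apply (hasSubst_iter hw a) (hasSubst_iter hw b)]

theorem iter_mul (hw : constantCoeff w = 0) (a b : ℕ) : w.iter (a * b) = (w.iter b).iter a := by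
  induction a with
  | zero => rw [zero_mul]; rfl
  | succ a ih =>
    rw [Nat.succ_mul, add_comm, iter_add hw, ih, iter_succ (constantCoeff_iter hw b)]

theorem map_iter {S : Type*} [CommRing S] (σ : R →+* S) (hw : constantCoeff w = 0) (n : ℕ) :
    map σ (w.iter n) = (map σ w).iter n := by
  induction n with
  | zero => exact map_X σ
  | succ n ih =>
    have hσw : constantCoeff (map σ w) = 0 := by rw [constantCoeff_map, hw, map_zero]
    rw [iter_succ hw, iter_succ hσw, ← ih]
    exact map_subst (hasSubst_iter hw n) w

theorem iter_subst_eq_subst_iter {a b f : R⟦X⟧} (ha : constantCoeff a = 0)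
    (hb : constantCoeff b = 0) (hf : constantCoeff f = 0) (h : a.subst f = f.subst b) (n : ℕ) :
    (a.iter n).subst f = f.subst (b.iter n) := by
  have hf' := HasSubst.of_constantCoeff_zero' hf
  induction n with
  | zero => rw [iter, iter, subst_X hf', X_subst]
  | succ n ih =>
    rw [iter_succ ha, iter_succ hb, subst_comp_subst_apply (hasSubst_iter ha n) hf', ih,
      ← subst_comp_subst_apply hf' (hasSubst_iter hb n), h,
      subst_comp_subst_apply (HasSubst.of_constantCoeff_zero' hb) (hasSubst_iter hb n)]

end Iterate

theorem X_pow_mul_dvd_subst {m n : ℕ} {g f : R⟦X⟧} (hf0 : constantCoeff f = 0)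
    (hg : X ^ m ∣ g) (hf : X ^ n ∣ f) : X ^ (n * m) ∣ g.subst f := by
  obtain ⟨g', rfl⟩ := hg
  have hf' : HasSubst f := HasSubst.of_constantCoeff_zero' hf0
  rw [subst_mul hf', subst_pow hf', subst_X hf', pow_mul]
  exact (pow_dvd_pow_of_dvd hf m).mul_right _

theorem X_pow_succ_dvd_subst_sub {M : ℕ} {a b : R⟦X⟧} (ha : X ^ M ∣ a - X)
    (hb : X ^ 2 ∣ b - X) : X ^ (M + 1) ∣ a.subst b - (a + b - X) := by
  obtain ⟨g, hg⟩ := ha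
  obtain ⟨c, hc⟩ := hb
  have hb0 : constantCoeff b = 0 := by
    simpa using constantCoeff_eq_zero_of_X_pow_dvd two_ne_zero ⟨c, hc⟩
  have hb' : HasSubst b := HasSubst.of_constantCoeff_zero' hb0
  have hbM : b ^ M = X ^ M * (1 + X * c) ^ M := by
    rw [← mul_pow]; congr 1; linear_combination hc
  have key : a.subst b - (a + b - X) = X ^ M * ((1 + X * c) ^ M * g.subst b - g) := by
    rw [show a = X + X ^ M * g by linear_combination hg, subst_add hb', subst_mul hb',
      subst_pow hb', subst_X hb']
    linear_combination g.subst b * hbM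
  rw [key, pow_succ]
  refine mul_dvd_mul_left _ (X_dvd_iff.mpr ?_)
  simp [constantCoeff_subst_of_constantCoeff_zero hb0]

theorem X_pow_succ_dvd_iter_sub_nsmul {M : ℕ} (hM : 2 ≤ M) {v : R⟦X⟧} (hv : X ^ M ∣ v - X)
    (j : ℕ) : X ^ (M + 1) ∣ v.iter j - X - j • (v - X) := by
  have hv0 : constantCoeff v = 0 := by
    simpa using constantCoeff_eq_zero_of_X_pow_dvd (by omega) hv
  induction j with
  | zero => simp [iter]
  | succ j ih =>
    have hj : X ^ M ∣ v.iter j - X := by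
      have := ((pow_dvd_pow X M.le_succ).trans ih).add (hv.mul_left (j : R⟦X⟧))
      rwa [← nsmul_eq_mul, sub_add_cancel] at this
    have := (X_pow_succ_dvd_subst_sub hv ((pow_dvd_pow X hM).trans hj)).add ih
    rw [iter_succ hv0]
    convert this using 1
    rw [succ_nsmul]
    ring

theorem X_pow_succ_dvd_iter_sub (p : ℕ) [CharP R p] {M : ℕ} (hM : 2 ≤ M) {v : R⟦X⟧}
    (hv : X ^ M ∣ v - X) : X ^ (M + 1) ∣ v.iter p - X := by
  simpa [← Nat.cast_smul_eq_nsmul R] using X_pow_succ_dvd_iter_sub_nsmul hM hv p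

theorem X_pow_dvd_iter_pow_sub (p : ℕ) [CharP R p] {w : R⟦X⟧} (hw : X ^ 2 ∣ w - X) (s : ℕ) :
    X ^ (s + 2) ∣ w.iter (p ^ s) - X := by
  have hw0 : constantCoeff w = 0 := by
    simpa using constantCoeff_eq_zero_of_X_pow_dvd two_ne_zero hw
  induction s with
  | zero =>
    show X ^ 2 ∣ w.iter (0 + 1) - X
    rwa [iter_succ hw0, iter, X_subst]
  | succ s ih =>
    rw [pow_succ' p, iter_mul hw0]
    exact X_pow_succ_dvd_iter_sub p (by omega) ih

theorem sq_dvd_coe_subst_X_add_sub (P : Polynomial R) {h : R⟦X⟧} (hh : constantCoeff h = 0) :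
    h ^ 2 ∣ (P : R⟦X⟧).subst (X + h) - (P : R⟦X⟧) - d⁄dX R (P : R⟦X⟧) * h := by
  have hXh : HasSubst (X + h) := HasSubst.of_constantCoeff_zero' (by simp [hh])
  obtain ⟨q, hq⟩ := Polynomial.binomExpansion (P.map C) X h
  refine ⟨q, ?_⟩
  rw [Polynomial.eval_map, Polynomial.eval_map, Polynomial.derivative_map, Polynomial.eval_map,
    Polynomial.eval₂_C_X_eq_coe, Polynomial.eval₂_C_X_eq_coe] at hq
  rw [← algebraMap_eq (R := R)] at hq
  rw [subst_coe hXh, derivative_coe, Polynomial.aeval_def, hq]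
  ring

theorem X_pow_dvd_derivative {m : ℕ} {φ : R⟦X⟧} (h : X ^ (m + 1) ∣ φ) : X ^ m ∣ d⁄dX R φ := by
  refine X_pow_dvd_iff.mpr fun i hi => ?_
  rw [coeff_derivative, X_pow_dvd_iff.mp h (i + 1) (by omega), zero_mul]

theorem X_pow_dvd_subst_X_add_sub {n : ℕ} {h : R⟦X⟧} (hh : X ∣ h) (hn : X ^ n ∣ h ^ 2)
    (f : R⟦X⟧) : X ^ n ∣ f.subst (X + h) - f - d⁄dX R f * h := by
  have hXh : HasSubst (X + h) := HasSubst.of_constantCoeff_zero' (by simp [X_dvd_iff.mp hh])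
  -- `f` is its truncation `P`, covered by the polynomial Taylor formula, plus a multiple of `X ^ n`
  set P : Polynomial R := trunc n f
  have htail : X ^ n ∣ f - (P : R⟦X⟧) := X_pow_dvd_iff.mpr fun i hi => by
    simp [P, coeff_trunc, hi]
  have key : f.subst (X + h) - f - d⁄dX R f * h =
      ((f - (P : R⟦X⟧)).subst (X + h) - (f - (P : R⟦X⟧)) - d⁄dX R (f - (P : R⟦X⟧)) * h) +
        ((P : R⟦X⟧).subst (X + h) - (P : R⟦X⟧) - d⁄dX R (P : R⟦X⟧) * h) := by
    rw [subst_sub hXh, map_sub]; ring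
  rw [key]
  refine dvd_add (dvd_sub (dvd_sub ?_ htail) ?_)
    (hn.trans (sq_dvd_coe_subst_X_add_sub P (X_dvd_iff.mp hh)))
  · obtain ⟨g, hg⟩ := htail
    rw [hg, subst_mul hXh, subst_pow hXh, subst_X hXh]
    exact (pow_dvd_pow_of_dvd (dvd_add dvd_rfl hh) n).mul_right _
  · cases n with
    | zero => exact one_dvd _
    | succ n => rw [pow_succ]; exact mul_dvd_mul (X_pow_dvd_derivative htail) hh

theorem coeff_add_mul_of_X_pow_dvd {a b : ℕ} {φ ψ : R⟦X⟧} (hφ : X ^ a ∣ φ) (hψ : X ^ b ∣ ψ) :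
    coeff (a + b) (φ * ψ) = coeff a φ * coeff b ψ := by
  obtain ⟨φ', rfl⟩ := hφ
  obtain ⟨ψ', rfl⟩ := hψ
  rw [mul_mul_mul_comm, ← pow_add]
  simp [coeff_X_pow_mul']

theorem map_X_add_subst_ne_subst_X_add [NoZeroDivisors R] (σ : R →+* R) {f h : R⟦X⟧}
    (hf : X ^ 2 ∣ f) (hh : h ≠ 0) (hord : (d⁄dX R f).order < h.order) :
    (map σ (X + h)).subst f ≠ f.subst (X + h) := by
  have hf' : d⁄dX R f ≠ 0 := order_eq_top.not.mp hord.ne_top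
  set e := (d⁄dX R f).order.toNat
  set r := h.order.toNat
  have her : e < r := by
    rwa [← coe_toNat_order hf', ← coe_toNat_order hh, Nat.cast_lt] at hord
  have hf0 : constantCoeff f = 0 := constantCoeff_eq_zero_of_X_pow_dvd two_ne_zero hf
  have hleft : X ^ (2 * r) ∣ (map σ (X + h)).subst f - f := by
    have hf₀ := HasSubst.of_constantCoeff_zero' hf0
    rw [map_add, map_X, subst_add hf₀, subst_X hf₀, add_sub_cancel_left]
    exact X_pow_mul_dvd_subst hf0 (by simpa using map_dvd (map σ) (X_pow_order_dvd (φ := h))) hf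
  have hright : X ^ (e + r + 1) ∣ f.subst (X + h) - f - d⁄dX R f * h := by
    refine X_pow_dvd_subst_X_add_sub ((dvd_pow_self X (by omega)).trans X_pow_order_dvd) ?_ f
    calc X ^ (e + r + 1) ∣ (X ^ r) ^ 2 := by rw [← pow_mul]; exact pow_dvd_pow X (by omega)
      _ ∣ h ^ 2 := pow_dvd_pow_of_dvd X_pow_order_dvd 2
  -- at `X ^ (e + r)` the left side has the coefficient of `f`, the right side that of
  -- `f + f' * h`, which differs from it by `f'_e * h_r ≠ 0`
  intro hrel
  have hcoeff : coeff (e + r) (d⁄dX R f * h) = 0 := by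
    rw [show d⁄dX R f * h = ((map σ (X + h)).subst f - f) - (f.subst (X + h) - f - d⁄dX R f * h)
        by rw [hrel]; ring,
      map_sub, X_pow_dvd_iff.mp hleft _ (by omega), X_pow_dvd_iff.mp hright _ (by omega), sub_zero]
  rw [coeff_add_mul_of_X_pow_dvd X_pow_order_dvd X_pow_order_dvd] at hcoeff
  exact mul_ne_zero (coeff_order hf') (coeff_order hh) hcoeff

end PowerSeries

/-- if `w ∈ Y + Y²k[[Y]]` is invertible and nontorsion, `f ∈ Y·k[[Y]]` is
separable and `w^(m) ∘ f = f ∘ w`, then `f` is invertible (i.e. `f'(0) ≠ 0`). -/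
theorem separable_intertwiner_invertible {p : ℕ} [Fact p.Prime] {k : Type*} [Field k]
    [CharP k p] [PerfectRing k p] (m : ℤ) (w f : PowerSeries k)
    (hw0 : constantCoeff w = 0) (hw1 : coeff 1 w = 1)
    (hwnt : ∀ n : ℕ, 1 ≤ n → w.iter n ≠ X)
    (hf0 : constantCoeff f = 0) (hfsep : f.derivativeFun ≠ 0)
    (hcomm : (coeffTwist k p m w).comp' f = f.comp' w) :
    constantCoeff f.derivativeFun ≠ 0 := by
  change constantCoeff (d⁄dX k f) ≠ 0
  replace hfsep : d⁄dX k f ≠ 0 := hfsep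
  intro hf'0
  have hwX : X ^ 2 ∣ w - X := X_pow_dvd_iff.mpr fun i hi => by
    interval_cases i <;> simp [hw0, hw1]
  have hfX : X ^ 2 ∣ f := X_pow_dvd_iff.mpr fun i hi => by
    interval_cases i
    · simpa using hf0
    · simpa [coeff_derivative] using (coeff_zero_eq_constantCoeff_apply _).trans hf'0
  set σ : k →+* k := ↑(frobeniusEquiv k p ^ m)
  set e := (d⁄dX k f).order.toNat
  set u := w.iter (p ^ e)
  have hu : X ^ (e + 2) ∣ u - X := X_pow_dvd_iter_pow_sub p hwX e
  have hrel : (map σ u).subst f = f.subst u := by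
    rw [map_iter σ hw0]
    refine iter_subst_eq_subst_iter (by rw [constantCoeff_map, hw0, map_zero]) hw0 hf0 ?_ _
    rw [← comp'_eq_subst hf0, ← comp'_eq_subst hw0]
    exact hcomm
  have hord : (d⁄dX k f).order < (u - X).order := by
    rw [← coe_toNat_order hfsep]
    exact lt_of_lt_of_le (by norm_cast; omega) (nat_le_order _ _ (X_pow_dvd_iff.mp hu))
  have hne : u - X ≠ 0 := sub_ne_zero.mpr (hwnt _ (Nat.one_le_pow _ _ (Fact.out : p.Prime).pos))
  exact map_X_add_subst_ne_subst_X_add σ hfX hne hord (by rwa [add_sub_cancel])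
end

section
/- Let $k$ be a field of characteristic $p$, let $f(Y) = f_n Y^n + O(Y^{n+1})$ with $f_n \neq 0$, $n \geq 1$, let $f'(Y) = g_k Y^k + O(Y^{k+1})$ with $g_k \neq 0$, and let $w(Y) = Y + w_r Y^r + O(Y^{r+1})$ with $w_r \neq 0$ and $r \geq k+1$, $r \geq 2$. Fix $m \in \mathbb{Z}$ over a perfect $k$. Then: (a) $w^{(m)} \circ f = f + w_r^{p^m} f_n^r Y^{nr} + O(Y^{nr+1})$, and (b) $f \circ w = f + w_r g_k Y^{r+k} + O(Y^{r+k+1})$. -/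
open PowerSeries

/-!
Write `w = Y + d`; the hypotheses on `w` say exactly that `Y ^ r ∣ d` (divisibility by `Y ^ N`
is how `O(Y ^ N)` is expressed below). For (a), `f ^ i = O(Y ^ (n * i))`, so below degree
`n * r + 1` only the terms `i = 1` and `i = r` of `w⁽ᵐ⁾ ∘ f = ∑ wᵢ^(p^m) f ^ i` contribute.
For (b), coefficient `j` of `f ∘ w` only sees the polynomial truncation of `f`, to which Taylor's
formula `f(Y + d) = f + f' d + O(d²)` applies; as `d² = O(Y ^ (2r))` and `r + k < 2r`, the
difference `f ∘ w - f` agrees with `f' d = g_k w_r Y ^ (r + k) + …` up to that degree.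
-/

namespace PowerSeries

variable {R : Type*} [CommRing R]

theorem coeff_comp' (w v : PowerSeries R) (n : ℕ) :
    coeff n (w.comp' v) = ∑ i ∈ Finset.range (n + 1), coeff i w * coeff n (v ^ i) :=
  coeff_mk _ _

theorem coeff_comp'_eq_coeff_eval₂_trunc (w v : PowerSeries R) (n : ℕ) :
    coeff n (w.comp' v) = coeff n ((trunc (n + 1) w).eval₂ C v) := by
  rw [coeff_comp', Polynomial.eval₂_eq_sum_range' C (natDegree_trunc_lt w n), map_sum]
  refine Finset.sum_congr rfl fun i hi => ?_
  rw [coeff_C_mul, coeff_trunc, if_pos (Finset.mem_range.mp hi)]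

theorem coeff_eq_coeff_X_of_X_pow_dvd_sub {W : PowerSeries R} {r i : ℕ} (hW : X ^ r ∣ W - X)
    (hi : i < r) : coeff i W = coeff i (X : PowerSeries R) :=
  sub_eq_zero.mp (by rw [← map_sub]; exact X_pow_dvd_iff.mp hW i hi)

theorem X_pow_mul_dvd_pow {f : PowerSeries R} {a : ℕ} (hf : X ^ a ∣ f) (i : ℕ) :
    X ^ (a * i) ∣ f ^ i :=
  pow_mul (X : PowerSeries R) a i ▸ pow_dvd_pow_of_dvd hf i

theorem coeff_pow_eq_zero_of_X_pow_dvd {f : PowerSeries R} {a i j : ℕ} (hf : X ^ a ∣ f)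
    (hj : j < a * i) : coeff j (f ^ i) = 0 :=
  X_pow_dvd_iff.mp (X_pow_mul_dvd_pow hf i) j hj

theorem coeff_add_mul_of_X_pow_dvd_s4 {f g : PowerSeries R} {a b : ℕ} (hf : X ^ a ∣ f)
    (hg : X ^ b ∣ g) :
    coeff (a + b) (f * g) = coeff a f * coeff b g := by
  obtain ⟨f, rfl⟩ := hf
  obtain ⟨g, rfl⟩ := hg
  rw [mul_mul_mul_comm, ← pow_add]
  simp [coeff_X_pow_mul']

theorem coeff_mul_pow_of_X_pow_dvd {f : PowerSeries R} {a : ℕ} (hf : X ^ a ∣ f) (i : ℕ) :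
    coeff (a * i) (f ^ i) = coeff a f ^ i := by
  induction i with
  | zero => simp
  | succ i ih =>
    rw [pow_succ, pow_succ, mul_add_one,
      coeff_add_mul_of_X_pow_dvd_s4 (X_pow_mul_dvd_pow hf i) hf, ih]

theorem coeff_comp'_of_X_pow_dvd_sub_X {W f : PowerSeries R} {n r j : ℕ} (hW : X ^ r ∣ W - X)
    (hr : 2 ≤ r) (hf : X ^ n ∣ f) (hn : 1 ≤ n) (hj : j ≤ n * r) :
    coeff j (W.comp' f) = coeff j f + coeff r W * coeff j (f ^ r) := by
  have hW1 : coeff 1 W = 1 := by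
    rw [coeff_eq_coeff_X_of_X_pow_dvd_sub hW (by omega), coeff_one_X]
  have hnr : r ≤ n * r := Nat.le_mul_of_pos_left r hn
  rw [coeff_comp', Finset.sum_eq_add 1 r (by omega), hW1, one_mul, pow_one]
  · intro i _ ⟨hi1, hir⟩
    rcases Nat.lt_or_gt_of_ne hir with hir | hir
    · rw [coeff_eq_coeff_X_of_X_pow_dvd_sub hW hir, coeff_X, if_neg hi1, zero_mul]
    · rw [coeff_pow_eq_zero_of_X_pow_dvd hf (by nlinarith), mul_zero]
  · intro h1
    rw [coeff_pow_eq_zero_of_X_pow_dvd hf (by rw [Finset.mem_range] at h1; omega), mul_zero]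
  · intro hr'
    rw [coeff_pow_eq_zero_of_X_pow_dvd hf (by rw [Finset.mem_range] at hr'; omega), mul_zero]

theorem coeff_comp'_X_add (f d : PowerSeries R) {r j : ℕ} (hd : X ^ r ∣ d) (hj : j < 2 * r) :
    coeff j (f.comp' (X + d)) = coeff j f + coeff j (d⁄dX R f * d) := by
  set P := (trunc (j + 1) f).map (C (R := R))
  obtain ⟨c, hc⟩ := Polynomial.binomExpansion P X d
  have hP : P.eval X = (trunc (j + 1) f : PowerSeries R) := by
    rw [Polynomial.eval_map, Polynomial.eval₂_C_X_eq_coe]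
  have hP' : P.derivative.eval X = (trunc j (d⁄dX R f) : PowerSeries R) := by
    rw [Polynomial.derivative_map, Polynomial.eval_map, Polynomial.eval₂_C_X_eq_coe,
      trunc_derivative]
  have htrunc : X ^ (j + r) ∣ (d⁄dX R f - (trunc j (d⁄dX R f) : PowerSeries R)) * d := by
    refine pow_add (X : PowerSeries R) j r ▸ mul_dvd_mul (X_pow_dvd_iff.mpr fun i hi => ?_) hd
    rw [map_sub, coeff_coe_trunc_of_lt hi, sub_self]
  have hsq : X ^ (2 * r) ∣ c * d ^ 2 := mul_comm r 2 ▸ (X_pow_mul_dvd_pow hd 2).mul_left c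
  have hlin : coeff j ((trunc j (d⁄dX R f) : PowerSeries R) * d) = coeff j (d⁄dX R f * d) := by
    have := X_pow_dvd_iff.mp htrunc j (by omega)
    rwa [sub_mul, map_sub, sub_eq_zero, eq_comm] at this
  rw [coeff_comp'_eq_coeff_eval₂_trunc, Polynomial.eval₂_eq_eval_map, hc, hP, hP', map_add,
    map_add, coeff_coe_trunc_of_lt j.lt_succ_self, hlin, X_pow_dvd_iff.mp hsq j hj, add_zero]

end PowerSeries

theorem leading_terms_general {p : ℕ} [Fact p.Prime] {k : Type*} [Field k] [CharP k p]
    [PerfectRing k p] (m : ℤ) (f w : PowerSeries k) (n k0 r : ℕ)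
    (hn : 1 ≤ n) (hflow : ∀ j < n, coeff j f = 0)
    (hglow : ∀ j < k0, coeff j f.derivativeFun = 0)
    (hw0 : constantCoeff w = 0) (hw1 : coeff 1 w = 1)
    (hwlow : ∀ j, 2 ≤ j → j < r → coeff j w = 0)
    (hrk : k0 + 1 ≤ r) (hr2 : 2 ≤ r) :
    ((∀ j < n * r, coeff j ((coeffTwist k p m w).comp' f - f) = 0) ∧
      coeff (n * r) ((coeffTwist k p m w).comp' f - f) =
        (frobeniusEquiv k p ^ m : k ≃+* k) (coeff r w) * coeff n f ^ r) ∧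
    ((∀ j < r + k0, coeff j (f.comp' w - f) = 0) ∧
      coeff (r + k0) (f.comp' w - f) = coeff r w * coeff k0 f.derivativeFun) := by
  have hf : X ^ n ∣ f := X_pow_dvd_iff.mpr hflow
  have hf' : X ^ k0 ∣ d⁄dX k f := X_pow_dvd_iff.mpr hglow
  have hw : X ^ r ∣ w - X := by
    refine X_pow_dvd_iff.mpr fun j hj => ?_
    rw [map_sub, coeff_X, sub_eq_zero]
    rcases j with _ | _ | j
    · simpa using hw0
    · exact hw1
    · exact hwlow _ (by omega) hj
  have hW : X ^ r ∣ coeffTwist k p m w - X := by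
    simpa [coeffTwist] using map_dvd (map (frobeniusEquiv k p ^ m : k ≃+* k).toRingHom) hw
  have hTaylor (j : ℕ) (hj : j ≤ r + k0) :
      coeff j (f.comp' w - f) = coeff j (d⁄dX k f * (w - X)) := by
    have := coeff_comp'_X_add f (w - X) hw (j := j) (by omega)
    rwa [add_sub_cancel, ← sub_eq_iff_eq_add', ← map_sub] at this
  refine ⟨⟨fun j hj => ?_, ?_⟩, ⟨fun j hj => ?_, ?_⟩⟩
  · rw [map_sub, coeff_comp'_of_X_pow_dvd_sub_X hW hr2 hf hn hj.le,
      coeff_pow_eq_zero_of_X_pow_dvd hf hj, mul_zero, add_zero, sub_self]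
  · rw [map_sub, coeff_comp'_of_X_pow_dvd_sub_X hW hr2 hf hn le_rfl, add_sub_cancel_left,
      coeff_mul_pow_of_X_pow_dvd hf]
    rfl
  · rw [hTaylor j hj.le]
    exact X_pow_dvd_iff.mp (pow_add (X : PowerSeries k) k0 r ▸ mul_dvd_mul hf' hw) j (by omega)
  · rw [hTaylor _ le_rfl, add_comm, coeff_add_mul_of_X_pow_dvd_s4 hf' hw, map_sub, coeff_X,
      if_neg (by omega), sub_zero, mul_comm]
    rfl

/-- leading-term computations for `w^(m) ∘ f - f` and `f ∘ w - f`. -/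
theorem leading_terms {p : ℕ} [Fact p.Prime] {k : Type*} [Field k] [CharP k p]
    [PerfectRing k p] (m : ℤ) (f w : PowerSeries k) (n k0 r : ℕ)
    (hn : 1 ≤ n) (hflow : ∀ j < n, coeff j f = 0) (hfn : coeff n f ≠ 0)
    (hglow : ∀ j < k0, coeff j f.derivativeFun = 0)
    (hgk : coeff k0 f.derivativeFun ≠ 0)
    (hw0 : constantCoeff w = 0) (hw1 : coeff 1 w = 1)
    (hwlow : ∀ j, 2 ≤ j → j < r → coeff j w = 0) (hwr : coeff r w ≠ 0)
    (hrk : k0 + 1 ≤ r) (hr2 : 2 ≤ r) :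
    ((∀ j < n * r, coeff j ((coeffTwist k p m w).comp' f - f) = 0) ∧
      coeff (n * r) ((coeffTwist k p m w).comp' f - f) =
        (frobeniusEquiv k p ^ m : k ≃+* k) (coeff r w) * coeff n f ^ r) ∧
    ((∀ j < r + k0, coeff j (f.comp' w - f) = 0) ∧
      coeff (r + k0) (f.comp' w - f) = coeff r w * coeff k0 f.derivativeFun) :=
  leading_terms_general m f w n k0 r hn hflow hglow hw0 hw1 hwlow hrk hr2
end

section
/- Suppose there exists an additive, Frobenius-section, $\gamma$-equivariant map $R : \mathbf{E} \to \mathbf{E}$ on $\mathbf{E} = k((Y))$ (i.e., $R(\phi_q(f)) = f$ and $R\gamma = \gamma R$), where $\gamma$ is an automorphism with $\mathbf{E}^{\gamma=1} = k$ and $\gamma \phi_q = \phi_q \gamma$. Then for any $f \in \mathbf{E}$ with $(1-\gamma)f \in \phi_q(\mathbf{E})$, we have $f \in k + \phi_q(\mathbf{E})$. -/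
/-! If `f - γ f = g ^ q`, then `R` turns this into `γ (R f) = R f - g`, and raising to the
`q`-th power (additive in characteristic `p`, since `q` is a power of `p`) shows that
`f - (R f) ^ q` is `γ`-fixed, hence a constant. -/

section FrobeniusSection

variable {A : Type*} [CommRing A] {p n : ℕ}
  {σ : A →+* A} {R : A →+ A}

theorem map_frobeniusSection_of_sub_eq_pow (hR : ∀ x, R (x ^ p ^ n) = x)
    (hRσ : ∀ x, R (σ x) = σ (R x)) {f g : A} (hf : f - σ f = g ^ p ^ n) :
    σ (R f) = R f - g := by
  have hσf : σ f = f - g ^ p ^ n := by rw [← hf, sub_sub_cancel]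
  rw [← hRσ, hσf, map_sub, hR]

theorem sub_pow_frobeniusSection_fixed [ExpChar A p] (hR : ∀ x, R (x ^ p ^ n) = x)
    (hRσ : ∀ x, R (σ x) = σ (R x)) {f g : A} (hf : f - σ f = g ^ p ^ n) :
    σ (f - R f ^ p ^ n) = f - R f ^ p ^ n := by
  rw [map_sub, map_pow, map_frobeniusSection_of_sub_eq_pow hR hRσ hf,
    sub_pow_expChar_pow, ← hf]
  ring

end FrobeniusSection

/-- given an additive `γ`-equivariant section `R` of `φ_q : f ↦ f^q` on
`𝐄 = k((Y))`, with `𝐄^{γ=1} = k`, any `f` with `(1-γ)f ∈ φ_q(𝐄)` lies in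
`k + φ_q(𝐄)`. -/
theorem section_descent {k : Type*} [Field k] [Fintype k] (q : ℕ) (hq : Fintype.card k = q)
    (γ : LaurentSeries k ≃ₐ[k] LaurentSeries k)
    (R : LaurentSeries k →+ LaurentSeries k)
    (hR1 : ∀ f, R (f ^ q) = f) (hR2 : ∀ f, R (γ f) = γ (R f))
    (hfix : ∀ f : LaurentSeries k, γ f = f → ∃ c : k, f = HahnSeries.C c)
    (f : LaurentSeries k) (hf : ∃ g, f - γ f = g ^ q) :
    ∃ (c : k) (g : LaurentSeries k), f = HahnSeries.C c + g ^ q := by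
  obtain ⟨g, hg⟩ := hf
  obtain ⟨p, hchar, n, hp, hcard⟩ := FiniteField.card' k
  have : Fact p.Prime := ⟨hp⟩
  have : CharP (LaurentSeries k) p :=
    charP_of_injective_algebraMap (algebraMap k (LaurentSeries k)).injective p
  subst hq
  rw [hcard] at hR1 hg ⊢
  obtain ⟨c, hc⟩ := hfix _ <|
    sub_pow_frobeniusSection_fixed (σ := (γ : LaurentSeries k →+* LaurentSeries k)) hR1 hR2 hg
  exact ⟨c, R f, by rw [← hc, sub_add_cancel]⟩
end
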